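/- Let 𝒮 be a triangulated category with a bounded t-structure (𝒮^{≤0}, 𝒮^{≥0}) whose heart ℋ := 𝒮^{≤0} ∩ 𝒮^{≥0} is algebraic in the following sense: there are objects S_1, …, S_k ∈ ℋ such that every object of ℋ lies in coprod_m({S_1, …, S_k}) for some m (every object of the heart is a finite iterated extension of finite direct sums of the S_i; this holds when ℋ is a length category with exactly the simple objects S_1, …, S_k up to isomorphism). Let G := S_1 ⊕ ⋯ ⊕ S_k. Then G is a classical generator of 𝒮 and fd(𝒮, G) = 0; in fact G(-∞,-1]^⊥ = ⟨G⟩^{[0,∞)} = 𝒮^{≥0}. -/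

import Mathlib

open CategoryTheory Limits Pretriangulated

universe v u

namespace Paper

variable (C : Type u) [Category.{v} C] [HasZeroObject C] [HasShift C ℤ]
  [Preadditive C] [∀ n : ℤ, (shiftFunctor C n).Additive] [Pretriangulated C]

/-- `Z` is a direct sum of `X` and `Y`. -/
def IsDirSum {C : Type u} [Category.{v} C] [Preadditive C] (Z X Y : C) : Prop :=
  ∃ (i₁ : X ⟶ Z) (i₂ : Y ⟶ Z) (p₁ : Z ⟶ X) (p₂ : Z ⟶ Y),
    i₁ ≫ p₁ = 𝟙 X ∧ i₂ ≫ p₂ = 𝟙 Y ∧ i₁ ≫ p₂ = 0 ∧ i₂ ≫ p₁ = 0 ∧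
    p₁ ≫ i₁ + p₂ ≫ i₂ = 𝟙 Z

/-- The extension `A * B` of two classes of objects. -/
def star (A B : Set C) : Set C :=
  {Z | ∃ (X Y : C) (f : X ⟶ Z) (g : Z ⟶ Y) (h : Y ⟶ (X⟦(1:ℤ)⟧ : C)),
      X ∈ A ∧ Y ∈ B ∧ Triangle.mk f g h ∈ distTriang C}

/-- Closure of a class of objects under finite direct sums and isomorphism. -/
inductive addClos (A : Set C) : C → Prop
  | of {X Y : C} (e : X ≅ Y) (hY : Y ∈ A) : addClos A X
  | zero {X : C} (hX : IsZero X) : addClos A X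
  | dirSum {Z X Y : C} (hX : addClos A X) (hY : addClos A Y) (h : IsDirSum Z X Y) :
      addClos A Z

/-- `coprodN A n` is `coprod_n (A)`; by convention `coprodN A 0` consists of zero objects. -/
def coprodN (A : Set C) : ℕ → Set C
  | 0 => {X | IsZero X}
  | 1 => setOf (addClos C A)
  | (n+2) => star C (setOf (addClos C A)) (coprodN A (n+1))

/-- Direct summands of objects in `A`. -/
def smd (A : Set C) : Set C := {X | ∃ (Z Y : C), Z ∈ A ∧ IsDirSum Z X Y}

/-- The class `G[I] = {G[-i] : i ∈ I}` (up to isomorphism). -/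
def shiftsOf (G : C) (I : Set ℤ) : Set C :=
  {X | ∃ i ∈ I, Nonempty (X ≅ (G⟦(-i : ℤ)⟧ : C))}

/-- `⟨G⟩ₙ^I := smd (coprodₙ (G[I]))`. -/
def genN (G : C) (I : Set ℤ) (n : ℕ) : Set C := smd C (coprodN C (shiftsOf C G I) n)

/-- `⟨G⟩^I := ⋃_{n > 0} ⟨G⟩ₙ^I`. -/
def gen (G : C) (I : Set ℤ) : Set C := {X | ∃ n : ℕ, X ∈ genN C G I (n+1)}

/-- The right orthogonal `G[I]^⊥`. -/
def rPerpShifts (G : C) (I : Set ℤ) : Set C :=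
  {Y | ∀ i ∈ I, ∀ f : (G⟦(-i : ℤ)⟧ : C) ⟶ Y, f = 0}

/-- `fd(𝒮, G) ≤ m` : `G(-∞,-1]^⊥ ⊆ ⟨G⟩^{[0,∞)}[m] = ⟨G⟩^{[-m,∞)}`. -/
def fdLE (G : C) (m : ℤ) : Prop :=
  ∀ X ∈ rPerpShifts C G (Set.Iic (-1)), X ∈ gen C G (Set.Ici (-m))

/-- `fd(𝒮ᵒᵖ, Gᵒᵖ) ≤ m`, expressed inside `𝒮`. -/
def fdOpLE (G : C) (m : ℤ) : Prop :=
  ∀ X : C, (∀ j : ℤ, j ≤ -1 → ∀ f : X ⟶ (G⟦j⟧ : C), f = 0) →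
    X ∈ gen C G (Set.Iic m)

/-- A t-structure on `C`, given by its aisle `le = 𝒮^{≤0}` and coaisle `ge = 𝒮^{≥0}`. -/
structure TStructure where
  le : Set C
  ge : Set C
  le_iso : ∀ ⦃X Y : C⦄, (X ≅ Y) → X ∈ le → Y ∈ le
  ge_iso : ∀ ⦃X Y : C⦄, (X ≅ Y) → X ∈ ge → Y ∈ ge
  le_shift : ∀ X ∈ le, (X⟦(1:ℤ)⟧ : C) ∈ le
  ge_shift : ∀ X ∈ ge, (X⟦(-1:ℤ)⟧ : C) ∈ ge
  hom_zero : ∀ X ∈ le, ∀ Y ∈ ge, ∀ f : (X⟦(1:ℤ)⟧ : C) ⟶ Y, f = 0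
  triangle : ∀ X : C, ∃ (A B : C) (_ : A ∈ le) (_ : B ∈ ge)
      (f : ((A⟦(1:ℤ)⟧ : C)) ⟶ X) (g : X ⟶ B) (h : B ⟶ ((A⟦(1:ℤ)⟧ : C)⟦(1:ℤ)⟧)),
      Triangle.mk f g h ∈ distTriang C

variable {C}

/-- bounded above: `𝒮 = ⋃ₙ 𝒮^{≤n}`. -/
def TStructure.BoundedAbove (T : TStructure C) : Prop :=
  ∀ X : C, ∃ n : ℕ, (X⟦(n : ℤ)⟧ : C) ∈ T.le

/-- bounded below: `𝒮 = ⋃ₙ 𝒮^{≥-n}`. -/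
def TStructure.BoundedBelow (T : TStructure C) : Prop :=
  ∀ X : C, ∃ n : ℕ, (X⟦(-(n : ℤ))⟧ : C) ∈ T.ge

/-- bounded t-structure. -/
def TStructure.Bounded (T : TStructure C) : Prop :=
  T.BoundedAbove ∧ T.BoundedBelow

/-- A good metric on `C`. -/
structure IsGoodMetric (M : ℕ → Set C) : Prop where
  zero_mem : ∀ n : ℕ, ∀ X : C, IsZero X → X ∈ M n
  ext : ∀ n : ℕ, star C (M n) (M n) ⊆ M n
  shift_neg : ∀ n : ℕ, ∀ X ∈ M (n+1), (X⟦(-1:ℤ)⟧ : C) ∈ M n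
  mono : ∀ n : ℕ, ∀ X ∈ M (n+1), X ∈ M n
  shift_pos : ∀ n : ℕ, ∀ X ∈ M (n+1), (X⟦(1:ℤ)⟧ : C) ∈ M n

variable (C)

/-- A chain of morphisms indexed by `ℕ`. -/
structure Chain where
  X : ℕ → C
  f : ∀ n : ℕ, X n ⟶ X (n+1)

/-- `Z` is a cone of `f : A ⟶ B`. -/
def IsConeOf {A B : C} (Z : C) (f : A ⟶ B) : Prop :=
  ∃ (g : B ⟶ Z) (h : Z ⟶ (A⟦(1:ℤ)⟧ : C)), Triangle.mk f g h ∈ distTriang C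

variable {C}

/-- Cauchy sequence with respect to a (good) metric `M`. -/
def Chain.IsCauchy (c : Chain C) (M : ℕ → Set C) : Prop :=
  ∀ i : ℕ, ∃ N : ℕ, ∀ j : ℕ, N ≤ j → ∃ Z : C, IsConeOf C Z (c.f j) ∧ Z ∈ M i


/-- `G` is a finite direct sum of the family `S`. -/
def IsFiniteDirSum {C : Type u} [Category.{v} C] [Preadditive C]
    {k : ℕ} (G : C) (S : Fin k → C) : Prop :=
  ∃ (ι : ∀ i, S i ⟶ G) (π : ∀ i, G ⟶ S i),
    (∀ i, ι i ≫ π i = 𝟙 (S i)) ∧ (∀ i j, i ≠ j → ι i ≫ π j = 0) ∧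
    (∑ i, π i ≫ ι i) = 𝟙 G

end Paper

/-!
The classes `𝒮^{≤n}` and `𝒮^{≥n}` are Hom-orthogonals, so they, like `G(-∞,-1]^⊥`, are closed
under extensions and summands. As `G` lies in the heart, this gives `⟨G⟩^{[0,∞)} ⊆ 𝒮^{≥0}`, and
`G(-∞,-1]^⊥ ⊆ 𝒮^{≥0}` once `𝒮^{≤-1} ⊆ ⟨G⟩^{(-∞,-1]}`.

Conversely, by induction on `n`, an object `Y ∈ 𝒮^{≥0} ∩ 𝒮^{≤n}` is an extension of
`τ^{≥1}Y ∈ ⟨G⟩^{[1,n]}` by `τ^{≤0}Y`, an iterated extension `A₁ * (A₂ * ⋯)` of sums of the `S i`.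
Without the octahedral axiom such extensions cannot be reassociated, so the layers are absorbed
one at a time: the cone `Y₁` of `A₁ ⟶ Y` has `τ^{≤0}Y₁ ≅ A₂ * ⋯` by a Yoneda argument on
`𝒮^{≤0}`. Boundedness turns these inclusions into the stated equalities.
-/

namespace Paper

open ZeroObject

section Preadditive

variable {C : Type u} [Category.{v} C] [Preadditive C]

lemma IsDirSum.biprod [HasBinaryBiproducts C] (X Y : C) : IsDirSum (X ⊞ Y) X Y :=
  ⟨biprod.inl, biprod.inr, biprod.fst, biprod.snd, by simp, by simp, by simp, by simp,
    biprod.total⟩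

lemma IsDirSum.of_isZero_right {X N : C} (hN : IsZero N) : IsDirSum X X N :=
  ⟨𝟙 X, 0, 𝟙 X, 0, by simp, hN.eq_of_src _ _, by simp, by simp, by simp⟩

lemma IsDirSum.of_iso_left {X X' Y Z : C} (e : X' ≅ X) (h : IsDirSum Z X Y) :
    IsDirSum Z X' Y := by
  obtain ⟨i₁, i₂, p₁, p₂, h₁, h₂, h₃, h₄, h₅⟩ := h
  exact ⟨e.hom ≫ i₁, i₂, p₁ ≫ e.inv, p₂, by simp [reassoc_of% h₁], h₂, by simp [h₃],
    by simp [reassoc_of% h₄], by simpa using h₅⟩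

lemma IsDirSum.of_iso {X Y Z Z' : C} (e : Z' ≅ Z) (h : IsDirSum Z X Y) : IsDirSum Z' X Y := by
  obtain ⟨i₁, i₂, p₁, p₂, h₁, h₂, h₃, h₄, h₅⟩ := h
  refine ⟨i₁ ≫ e.inv, i₂ ≫ e.inv, e.hom ≫ p₁, e.hom ≫ p₂, by simp [h₁], by simp [h₂],
    by simp [h₃], by simp [h₄], ?_⟩
  simpa [Preadditive.add_comp, Preadditive.comp_add] using e.hom ≫= h₅ =≫ e.inv

lemma IsDirSum.map {D : Type*} [Category D] [Preadditive D] (F : C ⥤ D) [F.Additive]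
    {Z X Y : C} (h : IsDirSum Z X Y) : IsDirSum (F.obj Z) (F.obj X) (F.obj Y) := by
  obtain ⟨i₁, i₂, p₁, p₂, h₁, h₂, h₃, h₄, h₅⟩ := h
  refine ⟨F.map i₁, F.map i₂, F.map p₁, F.map p₂, ?_, ?_, ?_, ?_, ?_⟩ <;>
    simp only [← F.map_comp, ← F.map_add, h₁, h₂, h₃, h₄, h₅, F.map_id, F.map_zero]

def leftOrth (𝒴 : Set C) : Set C := {X | ∀ Y ∈ 𝒴, ∀ f : X ⟶ Y, f = 0}

def rightOrth (𝒳 : Set C) : Set C := {Y | ∀ X ∈ 𝒳, ∀ f : X ⟶ Y, f = 0}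

lemma leftOrth_antitone : Antitone (leftOrth : Set C → Set C) :=
  fun _ _ h _ hX Y hY => hX Y (h hY)

lemma rightOrth_antitone : Antitone (rightOrth : Set C → Set C) :=
  fun _ _ h _ hY X hX => hY X (h hX)

lemma IsFiniteDirSum.mem_leftOrth {k : ℕ} {S : Fin k → C} {G : C} (hG : IsFiniteDirSum G S)
    {𝒴 : Set C} (hS : ∀ i, S i ∈ leftOrth 𝒴) : G ∈ leftOrth 𝒴 := by
  obtain ⟨ι, π, -, -, hsum⟩ := hG
  intro Y hY f
  rw [← Category.id_comp f, ← hsum, Preadditive.sum_comp]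
  exact Finset.sum_eq_zero fun i _ => by rw [Category.assoc, hS i Y hY (ι i ≫ f), comp_zero]

lemma IsFiniteDirSum.mem_rightOrth {k : ℕ} {S : Fin k → C} {G : C} (hG : IsFiniteDirSum G S)
    {𝒳 : Set C} (hS : ∀ i, S i ∈ rightOrth 𝒳) : G ∈ rightOrth 𝒳 := by
  obtain ⟨ι, π, -, -, hsum⟩ := hG
  intro X hX f
  rw [← Category.comp_id f, ← hsum, Preadditive.comp_sum]
  exact Finset.sum_eq_zero fun i _ => by rw [← Category.assoc, hS i X hX (f ≫ π i), zero_comp]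

def IsHomBijectiveOn (𝒲 : Set C) {A Y : C} (e : A ⟶ Y) : Prop :=
  ∀ W ∈ 𝒲, Function.Bijective (Preadditive.rightComp W e)

lemma nonempty_iso_of_isHomBijectiveOn {𝒲 : Set C} {A A' Y : C} (hA : A ∈ 𝒲) (hA' : A' ∈ 𝒲)
    {e : A ⟶ Y} {t : A' ⟶ Y} (he : IsHomBijectiveOn 𝒲 e) (ht : IsHomBijectiveOn 𝒲 t) :
    Nonempty (A ≅ A') := by
  obtain ⟨a, ha : a ≫ t = e⟩ := (ht A hA).2 e
  obtain ⟨b, hb : b ≫ e = t⟩ := (he A' hA').2 t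
  refine ⟨⟨a, b, (he A hA).1 ?_, (ht A' hA').1 ?_⟩⟩ <;>
    simp [Preadditive.rightComp, ha, hb]

end Preadditive

section Shift

variable {C : Type u} [Category.{v} C] [HasShift C ℤ] [Preadditive C]
  [∀ n : ℤ, (shiftFunctor C n).Additive]

lemma addClos_shift {A B : Set C} (s : ℤ) (hAB : ∀ X ∈ A, X⟦s⟧ ∈ B) {X : C}
    (h : addClos C A X) : addClos C B (X⟦s⟧) := by
  induction h with
  | of e hY => exact .of ((shiftFunctor C s).mapIso e) (hAB _ hY)
  | zero hX => exact .zero ((shiftFunctor C s).map_isZero hX)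
  | dirSum _ _ hsum ihX ihY => exact .dirSum ihX ihY (hsum.map (shiftFunctor C s))

lemma eq_zero_of_shift_map_eq_zero {X Y X' Y' : C} (s : ℤ) (f : X ⟶ Y) (e₁ : X' ≅ X⟦s⟧)
    (e₂ : Y⟦s⟧ ≅ Y') (h : e₁.hom ≫ f⟦s⟧' ≫ e₂.hom = 0) : f = 0 := by
  rwa [Preadditive.IsIso.comp_left_eq_zero, Preadditive.IsIso.comp_right_eq_zero,
    Functor.map_eq_zero_iff] at h

end Shift

section Pretriangulated

variable {C : Type u} [Category.{v} C] [HasZeroObject C] [HasShift C ℤ] [Preadditive C]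
  [∀ n : ℤ, (shiftFunctor C n).Additive] [Pretriangulated C]

lemma distinguished_of_isos {T : Triangle C} (hT : T ∈ distTriang C) {X Y Z : C}
    (e₁ : X ≅ T.obj₁) (e₂ : Y ≅ T.obj₂) (e₃ : Z ≅ T.obj₃) :
    Triangle.mk (e₁.hom ≫ T.mor₁ ≫ e₂.inv) (e₂.hom ≫ T.mor₂ ≫ e₃.inv)
      (e₃.hom ≫ T.mor₃ ≫ e₁.inv⟦(1 : ℤ)⟧') ∈ distTriang C := by
  refine isomorphic_distinguished _ hT _ (Triangle.isoMk _ _ e₁ e₂ e₃ ?_ ?_ ?_)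
  all_goals simp [Triangle.mk, ← Functor.map_comp]

lemma exists_isDirSum_of_retraction {X Z : C} (ι : X ⟶ Z) (π : Z ⟶ X) (h : ι ≫ π = 𝟙 X) :
    ∃ Y, IsDirSum Z X Y := by
  obtain ⟨Y, g, δ, hT⟩ := distinguished_cocone_triangle ι
  have : IsSplitMono ι := IsSplitMono.mk' ⟨π, h⟩
  obtain ⟨e, -, -⟩ := exists_iso_binaryBiproduct_of_distTriang _ hT
    (Triangle.mor₃_eq_zero_of_mono₁ _ hT (by dsimp [Triangle.mk]; infer_instance))
  exact ⟨Y, (IsDirSum.biprod X Y).of_iso e⟩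

lemma mem_smd_of_retraction {𝒳 : Set C} {X Z : C} (ι : X ⟶ Z) (π : Z ⟶ X) (h : ι ≫ π = 𝟙 X)
    (hZ : Z ∈ 𝒳) : X ∈ smd C 𝒳 :=
  let ⟨Y, hY⟩ := exists_isDirSum_of_retraction ι π h
  ⟨Z, Y, hZ, hY⟩

lemma exists_distTriang_of_retractions {X Y Z X' Z' : C} {f : X ⟶ Y} {g : Y ⟶ Z}
    {h : Z ⟶ X⟦(1 : ℤ)⟧} (hT : Triangle.mk f g h ∈ distTriang C) (a : X ⟶ X') (a' : X' ⟶ X)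
    (ha : a ≫ a' = 𝟙 X) (c : Z ⟶ Z') (c' : Z' ⟶ Z) (hc : c ≫ c' = 𝟙 Z) :
    ∃ (Y' : C) (f' : X' ⟶ Y') (g' : Y' ⟶ Z'),
      Triangle.mk f' g' (c' ≫ h ≫ a⟦(1 : ℤ)⟧') ∈ distTriang C ∧ ∃ W, IsDirSum Y' Y W := by
  obtain ⟨Y', f', g', hT'⟩ := distinguished_cocone_triangle₂ (c' ≫ h ≫ a⟦(1 : ℤ)⟧')
  obtain ⟨b, hb₁, hb₂⟩ : ∃ b : Y ⟶ Y', f ≫ b = a ≫ f' ∧ g ≫ c = b ≫ g' :=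
    complete_distinguished_triangle_morphism₂ _ _ hT hT' a c
      (by simp [Triangle.mk, reassoc_of% hc])
  obtain ⟨b', hb'₁, hb'₂⟩ : ∃ b' : Y' ⟶ Y, f' ≫ b' = a' ≫ f ∧ g' ≫ c' = b' ≫ g :=
    complete_distinguished_triangle_morphism₂ _ _ hT' hT a' c'
      (by simp [Triangle.mk, ← Functor.map_comp, ha])
  -- `b ≫ b'` is an endomorphism of the triangle fixing its outer terms, hence invertible
  let φ : Triangle.mk f g h ⟶ Triangle.mk f g h := Triangle.homMk _ _ (𝟙 X) (b ≫ b') (𝟙 Z)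
    (by simp [Triangle.mk, reassoc_of% hb₁, hb'₁, reassoc_of% ha])
    (by simp [Triangle.mk, ← hb'₂, ← reassoc_of% hb₂, hc]) (by simp [Triangle.mk])
  have : IsIso (b ≫ b') :=
    isIso₂_of_isIso₁₃ φ hT hT (inferInstanceAs (IsIso (𝟙 X))) (inferInstanceAs (IsIso (𝟙 Z)))
  exact ⟨Y', f', g', hT', exists_isDirSum_of_retraction b (b' ≫ inv (b ≫ b'))
    (by rw [← Category.assoc, IsIso.hom_inv_id])⟩

lemma star_smd_subset (𝒳 𝒴 : Set C) : star C (smd C 𝒳) (smd C 𝒴) ⊆ smd C (star C 𝒳 𝒴) := by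
  rintro Y ⟨X, Z, f, g, h, ⟨X', -, hX', i, -, p, -, hip, -⟩, ⟨Z', -, hZ', j, -, q, -, hjq, -⟩, hT⟩
  obtain ⟨Y', f', g', hT', W, hW⟩ := exists_distTriang_of_retractions hT i p hip j q hjq
  exact ⟨Y', W, ⟨X', Z', f', g', _, hX', hZ', hT'⟩, hW⟩

structure IsExtensionClosed (𝒵 : Set C) : Prop where
  of_iso ⦃X Y : C⦄ : (X ≅ Y) → Y ∈ 𝒵 → X ∈ 𝒵
  of_isZero ⦃X : C⦄ : IsZero X → X ∈ 𝒵
  of_isDirSum ⦃Z X Y : C⦄ : IsDirSum Z X Y → X ∈ 𝒵 → Y ∈ 𝒵 → Z ∈ 𝒵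
  of_summand ⦃Z X Y : C⦄ : IsDirSum Z X Y → Z ∈ 𝒵 → X ∈ 𝒵
  ext ⦃T : Triangle C⦄ : T ∈ distTriang C → T.obj₁ ∈ 𝒵 → T.obj₃ ∈ 𝒵 → T.obj₂ ∈ 𝒵

namespace IsExtensionClosed

variable {𝒵 : Set C}

lemma mem_of_addClos (h𝒵 : IsExtensionClosed 𝒵) {A : Set C} (hA : A ⊆ 𝒵) {X : C}
    (hX : addClos C A X) : X ∈ 𝒵 := by
  induction hX with
  | of e hY => exact h𝒵.of_iso e (hA hY)
  | zero hX => exact h𝒵.of_isZero hX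
  | dirSum _ _ hsum ihX ihY => exact h𝒵.of_isDirSum hsum ihX ihY

lemma coprodN_subset (h𝒵 : IsExtensionClosed 𝒵) {A : Set C} (hA : A ⊆ 𝒵) :
    ∀ n, coprodN C A n ⊆ 𝒵
  | 0 => fun _ hX => h𝒵.of_isZero hX
  | 1 => fun _ hX => h𝒵.mem_of_addClos hA hX
  | n + 2 => fun _ ⟨_, _, _, _, _, hX, hY, hT⟩ =>
      h𝒵.ext hT (h𝒵.mem_of_addClos hA hX) (h𝒵.coprodN_subset hA (n + 1) hY)

lemma gen_subset (h𝒵 : IsExtensionClosed 𝒵) {G : C} {I : Set ℤ} (hG : shiftsOf C G I ⊆ 𝒵) :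
    gen C G I ⊆ 𝒵 :=
  fun _ ⟨n, _, _, hZ, hsum⟩ => h𝒵.of_summand hsum (h𝒵.coprodN_subset hG (n + 1) hZ)

end IsExtensionClosed

lemma isExtensionClosed_leftOrth (𝒴 : Set C) : IsExtensionClosed (leftOrth 𝒴) where
  of_iso X Y e hY W hW f := by
    rw [← e.hom_inv_id_assoc f, hY W hW (e.inv ≫ f), comp_zero]
  of_isZero X hX W _ f := hX.eq_of_src f 0
  of_isDirSum Z X Y := by
    rintro ⟨i₁, i₂, p₁, p₂, -, -, -, -, hsum⟩ hX hY W hW f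
    rw [← Category.id_comp f, ← hsum, Preadditive.add_comp, Category.assoc, Category.assoc,
      hX W hW (i₁ ≫ f), hY W hW (i₂ ≫ f), comp_zero, comp_zero, add_zero]
  of_summand Z X Y := by
    rintro ⟨i₁, -, p₁, -, h₁, -⟩ hZ W hW f
    rw [← Category.id_comp f, ← h₁, Category.assoc, hZ W hW (p₁ ≫ f), comp_zero]
  ext T hT h₁ h₃ W hW f := by
    obtain ⟨g, rfl⟩ := Triangle.yoneda_exact₂ T hT f (h₁ W hW _)
    rw [h₃ W hW g, comp_zero]

lemma isExtensionClosed_rightOrth (𝒳 : Set C) : IsExtensionClosed (rightOrth 𝒳) where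
  of_iso X Y e hY W hW f := by
    rw [← Category.comp_id f, ← e.hom_inv_id, ← Category.assoc, hY W hW (f ≫ e.hom), zero_comp]
  of_isZero X hX W _ f := hX.eq_of_tgt f 0
  of_isDirSum Z X Y := by
    rintro ⟨i₁, i₂, p₁, p₂, -, -, -, -, hsum⟩ hX hY W hW f
    rw [← Category.comp_id f, ← hsum, Preadditive.comp_add, ← Category.assoc, ← Category.assoc,
      hX W hW (f ≫ p₁), hY W hW (f ≫ p₂), zero_comp, zero_comp, add_zero]
  of_summand Z X Y := by
    rintro ⟨i₁, -, p₁, -, h₁, -⟩ hZ W hW f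
    rw [← Category.comp_id f, ← h₁, ← Category.assoc, hZ W hW (f ≫ i₁), zero_comp]
  ext T hT h₁ h₃ W hW f := by
    obtain ⟨g, rfl⟩ := Triangle.coyoneda_exact₂ T hT f (h₃ W hW _)
    rw [h₁ W hW g, zero_comp]

lemma coprodN_shift {A B : Set C} (s : ℤ) (hAB : ∀ X ∈ A, X⟦s⟧ ∈ B) :
    ∀ (n : ℕ) (X : C), X ∈ coprodN C A n → X⟦s⟧ ∈ coprodN C B n
  | 0, _, hX => (shiftFunctor C s).map_isZero hX
  | 1, _, hX => addClos_shift s hAB hX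
  | n + 2, _, ⟨U, V, _, _, _, hU, hV, hT⟩ =>
      ⟨U⟦s⟧, V⟦s⟧, _, _, _, addClos_shift s hAB hU, coprodN_shift s hAB (n + 1) V hV,
        Triangle.shift_distinguished _ hT s⟩

lemma gen_shift {G : C} {I I' : Set ℤ} (s : ℤ) (hII' : ∀ i ∈ I, i - s ∈ I') {X : C}
    (h : X ∈ gen C G I) : X⟦s⟧ ∈ gen C G I' := by
  obtain ⟨n, Z, W, hZ, hsum⟩ := h
  refine ⟨n, Z⟦s⟧, W⟦s⟧, coprodN_shift s ?_ _ Z hZ, hsum.map (shiftFunctor C s)⟩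
  rintro _ ⟨i, hi, ⟨e⟩⟩
  exact ⟨i - s, hII' i hi,
    ⟨(shiftFunctor C s).mapIso e ≪≫ ((shiftFunctorAdd' C (-i) s (-(i - s)) (by ring)).app G).symm⟩⟩

lemma gen_of_iso {G : C} {I : Set ℤ} {X Y : C} (e : X ≅ Y) (h : Y ∈ gen C G I) :
    X ∈ gen C G I :=
  let ⟨n, Z, W, hZ, hsum⟩ := h
  ⟨n, Z, W, hZ, hsum.of_iso_left e⟩

lemma mem_gen_of_shift_mem_gen {G : C} {I I' : Set ℤ} (s : ℤ) (hII' : ∀ i ∈ I, i + s ∈ I')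
    {X : C} (h : X⟦s⟧ ∈ gen C G I) : X ∈ gen C G I' :=
  gen_of_iso (shiftShiftNeg X s).symm (gen_shift (-s) (by simpa using hII') h)

lemma gen_mono {G : C} {I I' : Set ℤ} (h : I ⊆ I') : gen C G I ⊆ gen C G I' :=
  fun X hX => gen_of_iso ((shiftFunctorZero C ℤ).app X).symm
    (gen_shift 0 (fun i hi => by simpa using h hi) hX)

lemma IsFiniteDirSum.subset_smd_shiftsOf {k : ℕ} {S : Fin k → C} {G : C}
    (hG : IsFiniteDirSum G S) {I : Set ℤ} (h0 : 0 ∈ I) :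
    {Y | ∃ i, Y = S i} ⊆ smd C (shiftsOf C G I) := by
  rintro _ ⟨i, rfl⟩
  obtain ⟨ι, π, hιπ, -, -⟩ := hG
  exact mem_smd_of_retraction (ι i) (π i) (hιπ i)
    ⟨0, h0, ⟨((shiftFunctorZero' C (-0 : ℤ) neg_zero).app G).symm⟩⟩

lemma mem_smd_addClos {A B : Set C} (hAB : A ⊆ smd C B) {X : C} (hX : addClos C A X) :
    X ∈ smd C {Z | addClos C B Z} := by
  induction hX with
  | of e hY =>
      obtain ⟨Z, W, hZ, hsum⟩ := hAB hY
      exact ⟨Z, W, .of (Iso.refl Z) hZ, hsum.of_iso_left e⟩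
  | zero hX => exact ⟨_, 0, .zero hX, .of_isZero_right (isZero_zero C)⟩
  | dirSum _ _ hsum ihX ihY =>
      obtain ⟨Z₁, -, hZ₁, i₁, -, p₁, -, h₁, -⟩ := ihX
      obtain ⟨Z₂, -, hZ₂, i₂, -, p₂, -, h₂, -⟩ := ihY
      obtain ⟨a₁, a₂, b₁, b₂, -, -, -, -, hb⟩ := hsum
      exact mem_smd_of_retraction (biprod.lift (b₁ ≫ i₁) (b₂ ≫ i₂))
        (biprod.desc (p₁ ≫ a₁) (p₂ ≫ a₂)) (by simp [reassoc_of% h₁, reassoc_of% h₂, hb])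
        (.dirSum hZ₁ hZ₂ (IsDirSum.biprod Z₁ Z₂))

lemma star_addClos_gen_subset {A : Set C} {G : C} {I : Set ℤ}
    (hA : A ⊆ smd C (shiftsOf C G I)) : star C {X | addClos C A X} (gen C G I) ⊆ gen C G I :=
  fun _ ⟨V, R, f, g, h, hV, ⟨n, hR⟩, hT⟩ =>
    ⟨n + 1, star_smd_subset _ _ ⟨V, R, f, g, h, mem_smd_addClos hA hV, hR, hT⟩⟩

lemma coprodN_subset_gen {A : Set C} {G : C} {I : Set ℤ}
    (hA : A ⊆ smd C (shiftsOf C G I)) : ∀ m, coprodN C A (m + 1) ⊆ gen C G I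
  | 0 => fun _ hX => ⟨0, mem_smd_addClos hA hX⟩
  | m + 1 => fun _ ⟨V, R, f, g, h, hV, hR, hT⟩ =>
      star_addClos_gen_subset hA ⟨V, R, f, g, h, hV, coprodN_subset_gen hA m hR, hT⟩

lemma isIso_mor₁_of_mor₂_eq_zero {T : Triangle C} (hT : T ∈ distTriang C) (h₂ : T.mor₂ = 0)
    (h : ∀ φ : T.obj₁⟦(1 : ℤ)⟧ ⟶ T.obj₃, φ = 0) : IsIso T.mor₁ := by
  rw [← Triangle.isZero₃_iff_isIso₁ _ hT, IsZero.iff_id_eq_zero]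
  obtain ⟨φ, hφ⟩ := Triangle.yoneda_exact₃ T hT (𝟙 _) (by rw [h₂, zero_comp])
  rw [hφ, h φ, comp_zero]

lemma isIso_mor₂_of_mor₁_eq_zero {T : Triangle C} (hT : T ∈ distTriang C) (h₁ : T.mor₁ = 0)
    (h : ∀ φ : T.obj₁ ⟶ T.obj₃⟦(-1 : ℤ)⟧, φ = 0) : IsIso T.mor₂ := by
  rw [← Triangle.isZero₁_iff_isIso₂ _ hT, IsZero.iff_id_eq_zero]
  obtain ⟨φ, hφ⟩ := Triangle.coyoneda_exact₂ _ (inv_rot_of_distTriang _ hT) (𝟙 T.obj₁)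
    ((Category.id_comp _).trans h₁)
  rw [hφ, h φ]
  exact zero_comp

lemma isHomBijectiveOn_mor₁ {𝒲 : Set C} {T : Triangle C} (hT : T ∈ distTriang C)
    (h₃ : T.obj₃ ∈ rightOrth 𝒲) (h₃' : T.obj₃⟦(-1 : ℤ)⟧ ∈ rightOrth 𝒲) :
    IsHomBijectiveOn 𝒲 T.mor₁ := by
  intro W hW
  refine ⟨(injective_iff_map_eq_zero _).2 fun φ hφ => ?_, fun θ => ?_⟩
  · obtain ⟨ω, rfl⟩ := Triangle.coyoneda_exact₂ _ (inv_rot_of_distTriang _ hT) φ hφ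
    rw [h₃' W hW ω]
    exact zero_comp
  · obtain ⟨φ, rfl⟩ := Triangle.coyoneda_exact₂ _ hT θ (h₃ W hW _)
    exact ⟨φ, rfl⟩

/-- `e` completes a morphism from `A₁ → A → A₂` to `A₁ → Y → Y₁`. The octahedral axiom, which a
pretriangulated category lacks, would identify the cone of `e` with `R`; what survives is that
`e` is bijective on `Hom(W, -)` whenever `f` is and `Hom(W, R) = 0`. -/
lemma isHomBijectiveOn_of_octahedron {𝒲 : Set C} {A₁ A A₂ Y R Y₁ : C} {u : A₁ ⟶ A}
    {q : A ⟶ A₂} {δ : A₂ ⟶ A₁⟦(1 : ℤ)⟧} {f : A ⟶ Y} {g : Y ⟶ R} {h : R ⟶ A⟦(1 : ℤ)⟧}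
    {g₁ : Y ⟶ Y₁} {δ₁ : Y₁ ⟶ A₁⟦(1 : ℤ)⟧} {e : A₂ ⟶ Y₁}
    (hA : Triangle.mk u q δ ∈ distTriang C) (hY : Triangle.mk f g h ∈ distTriang C)
    (hY₁ : Triangle.mk (u ≫ f) g₁ δ₁ ∈ distTriang C) (he₂ : q ≫ e = f ≫ g₁)
    (he₃ : δ = e ≫ δ₁) (hf : IsHomBijectiveOn 𝒲 f) (hR : R ∈ rightOrth 𝒲) :
    IsHomBijectiveOn 𝒲 e := by
  intro W hW
  refine ⟨(injective_iff_map_eq_zero _).2 fun φ (hφ : φ ≫ e = 0) => ?_, fun θ => ?_⟩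
  · obtain ⟨ψ, rfl⟩ : ∃ ψ : W ⟶ A, φ = ψ ≫ q := Triangle.coyoneda_exact₃ _ hA φ
      (show φ ≫ δ = 0 by rw [he₃, ← Category.assoc, hφ, zero_comp])
    obtain ⟨χ, hχ⟩ : ∃ χ : W ⟶ A₁, ψ ≫ f = χ ≫ u ≫ f := Triangle.coyoneda_exact₂ _ hY₁ (ψ ≫ f)
      (show (ψ ≫ f) ≫ g₁ = 0 by rw [Category.assoc, ← he₂, ← Category.assoc, hφ])
    obtain rfl : ψ = χ ≫ u := (hf W hW).1 (by simpa [Preadditive.rightComp] using hχ)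
    have huq : u ≫ q = 0 := comp_distTriang_mor_zero₁₂ _ hA
    rw [Category.assoc, huq, comp_zero]
  · have hθ : (θ ≫ δ₁) ≫ u⟦(1 : ℤ)⟧' = 0 := by
      have h₃₁ : δ₁ ≫ (u ≫ f)⟦(1 : ℤ)⟧' = 0 := comp_distTriang_mor_zero₃₁ _ hY₁
      obtain ⟨ψ, hψ⟩ : ∃ ψ : W ⟶ R, θ ≫ δ₁ ≫ u⟦(1 : ℤ)⟧' = ψ ≫ h :=
        Triangle.coyoneda_exact₁ _ hY (θ ≫ δ₁ ≫ u⟦(1 : ℤ)⟧')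
          (show (θ ≫ δ₁ ≫ u⟦(1 : ℤ)⟧') ≫ f⟦(1 : ℤ)⟧' = 0 by
            rw [Functor.map_comp] at h₃₁
            simp [h₃₁])
      rw [Category.assoc, hψ, hR W hW ψ, zero_comp]
    obtain ⟨ρ, hρ⟩ : ∃ ρ : W ⟶ A₂, θ ≫ δ₁ = ρ ≫ δ := Triangle.coyoneda_exact₁ _ hA (θ ≫ δ₁) hθ
    obtain ⟨σ, hσ⟩ : ∃ σ : W ⟶ Y, θ - ρ ≫ e = σ ≫ g₁ :=
      Triangle.coyoneda_exact₃ _ hY₁ (θ - ρ ≫ e)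
        (show (θ - ρ ≫ e) ≫ δ₁ = 0 by
          rw [Preadditive.sub_comp, Category.assoc, ← he₃, ← hρ, sub_self])
    obtain ⟨τ, hτ : τ ≫ f = σ⟩ := (hf W hW).2 σ
    refine ⟨ρ + τ ≫ q, ?_⟩
    change (ρ + τ ≫ q) ≫ e = θ
    rw [Preadditive.add_comp, Category.assoc, he₂, ← Category.assoc, hτ, ← hσ, add_sub_cancel]

namespace TStructure

variable (T : TStructure C)

/-- `𝒮^{≤n}`, as the left orthogonal of `𝒮^{≥n+1} = {Z⟦b⟧ : Z ∈ 𝒮^{≥0}, b < -n}`. -/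
def leq (n : ℤ) : Set C := leftOrth {Y | ∃ Z ∈ T.ge, ∃ b < -n, Nonempty (Y ≅ Z⟦b⟧)}

/-- `𝒮^{≥n}`, as the right orthogonal of `𝒮^{≤n-1}`. -/
def geq (n : ℤ) : Set C := rightOrth (T.leq (n - 1))

variable {T}

lemma leq_mono {m n : ℤ} (h : m ≤ n) : T.leq m ⊆ T.leq n :=
  leftOrth_antitone fun _ ⟨Z, hZ, b, hb, e⟩ => ⟨Z, hZ, b, by omega, e⟩

lemma geq_anti {m n : ℤ} (h : m ≤ n) : T.geq n ⊆ T.geq m :=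
  rightOrth_antitone (leq_mono (by omega))

lemma isExtensionClosed_leq (n : ℤ) : IsExtensionClosed (T.leq n) :=
  isExtensionClosed_leftOrth _

lemma isExtensionClosed_geq (n : ℤ) : IsExtensionClosed (T.geq n) :=
  isExtensionClosed_rightOrth _

lemma shift_mem_leq {X : C} {n m s : ℤ} (hX : X ∈ T.leq n) (h : n - s ≤ m) :
    X⟦s⟧ ∈ T.leq m := by
  rintro Y ⟨Z, hZ, b, hb, ⟨e⟩⟩ f
  refine eq_zero_of_shift_map_eq_zero (-s) f (shiftShiftNeg X s).symm
    ((shiftFunctor C (-s)).mapIso e ≪≫ ((shiftFunctorAdd' C b (-s) (b - s) (by ring)).app Z).symm)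
    (hX _ ⟨Z, hZ, b - s, by omega, ⟨Iso.refl _⟩⟩ _)

lemma shift_mem_geq {X : C} {n m s : ℤ} (hX : X ∈ T.geq n) (h : m ≤ n - s) :
    X⟦s⟧ ∈ T.geq m := fun W hW f =>
  eq_zero_of_shift_map_eq_zero (-s) f (Iso.refl _) (shiftShiftNeg X s)
    (hX _ (shift_mem_leq hW (by omega)) _)

lemma shift_mem_le {X : C} (hX : X ∈ T.le) : ∀ n : ℕ, X⟦(n : ℤ)⟧ ∈ T.le
  | 0 => T.le_iso ((shiftFunctorZero' C ((0 : ℕ) : ℤ) rfl).app X).symm hX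
  | n + 1 => T.le_iso
      ((shiftFunctorAdd' C (n : ℤ) 1 ((n + 1 : ℕ) : ℤ) (by push_cast; ring)).app X).symm
      (T.le_shift _ (shift_mem_le hX n))

lemma le_subset_leq_zero : T.le ⊆ T.leq 0 := by
  rintro X hX Y ⟨Z, hZ, b, hb, ⟨e⟩⟩ f
  obtain ⟨n, hn⟩ : ∃ n : ℕ, (n : ℤ) + 1 = -b := ⟨(-b - 1).toNat, by omega⟩
  rw [← Preadditive.IsIso.comp_right_eq_zero f e.hom]
  exact eq_zero_of_shift_map_eq_zero (-b) _ ((shiftFunctorAdd' C (n : ℤ) 1 (-b) hn).app X).symm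
    (shiftShiftNeg Z b) (T.hom_zero _ (shift_mem_le hX n) Z hZ _)

lemma ge_subset_geq_zero : T.ge ⊆ T.geq 0 := fun Y hY _ hW f =>
  (Preadditive.IsIso.comp_right_eq_zero f ((shiftFunctorZero C ℤ).app Y).inv).1
    (hW _ ⟨Y, hY, 0, by omega, ⟨Iso.refl _⟩⟩ _)

lemma leq_zero : T.leq 0 = T.le := by
  refine subset_antisymm (fun X hX => ?_) le_subset_leq_zero
  obtain ⟨A, B, hA, hB, f, g, h, hT⟩ := T.triangle (X⟦(1 : ℤ)⟧)
  have : IsIso f := isIso_mor₁_of_mor₂_eq_zero hT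
    (ge_subset_geq_zero hB _ (shift_mem_leq hX (by omega)) g)
    (T.hom_zero _ (T.le_shift _ hA) _ hB)
  exact T.le_iso ((shiftFunctor C 1).preimageIso (asIso f)) hA

lemma geq_zero : T.geq 0 = T.ge := by
  refine subset_antisymm (fun Y hY => ?_) ge_subset_geq_zero
  obtain ⟨A, B, hA, hB, f, g, h, hT⟩ := T.triangle Y
  have hA' : A⟦(1 : ℤ)⟧ ∈ T.leq (0 - 1) := shift_mem_leq (le_subset_leq_zero hA) (by omega)
  have : IsIso g := isIso_mor₂_of_mor₁_eq_zero hT (hY _ hA' f)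
    (hA' _ ⟨B, hB, -1, by omega, ⟨Iso.refl _⟩⟩)
  exact T.ge_iso (asIso g).symm hB

lemma exists_distTriang_le_geq_one (T : TStructure C) (Y : C) :
    ∃ (A R : C) (f : A ⟶ Y) (g : Y ⟶ R) (h : R ⟶ A⟦(1 : ℤ)⟧),
      Triangle.mk f g h ∈ distTriang C ∧ A ∈ T.le ∧ R ∈ T.geq 1 := by
  obtain ⟨A, B, hA, hB, f, g, h, hT⟩ := T.triangle (Y⟦(1 : ℤ)⟧)
  exact ⟨A, B⟦(-1 : ℤ)⟧, _, _, _, distinguished_of_isos (Triangle.shift_distinguished _ hT (-1))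
    (shiftShiftNeg A 1).symm (shiftShiftNeg Y 1).symm (Iso.refl _), hA,
    shift_mem_geq (ge_subset_geq_zero hB) (by omega)⟩

lemma geq_one_subset_rightOrth_le : T.geq 1 ⊆ rightOrth T.le :=
  rightOrth_antitone (le_subset_leq_zero.trans (leq_mono (by omega)))

lemma isHomBijectiveOn_le_mor₁ {T' : Triangle C} (hT' : T' ∈ distTriang C)
    (h : T'.obj₃ ∈ T.geq 1) : IsHomBijectiveOn T.le T'.mor₁ :=
  isHomBijectiveOn_mor₁ hT' (geq_one_subset_rightOrth_le h)
    (geq_one_subset_rightOrth_le (shift_mem_geq h (by omega)))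

lemma obj₃_mem_leq {T' : Triangle C} (hT' : T' ∈ distTriang C) {n : ℤ} (hn : -1 ≤ n)
    (h₁ : T'.obj₁ ∈ T.le) (h₂ : T'.obj₂ ∈ T.leq n) : T'.obj₃ ∈ T.leq n :=
  (isExtensionClosed_leq n).ext (rot_of_distTriang _ hT') h₂
    (shift_mem_leq (le_subset_leq_zero h₁) (by omega))

lemma coprodN_subset_le {k : ℕ} {S : Fin k → C} (hS : ∀ i, S i ∈ T.le) (m : ℕ) :
    coprodN C {Y | ∃ i, Y = S i} m ⊆ T.le := by
  rw [← leq_zero]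
  exact (isExtensionClosed_leq 0).coprodN_subset
    (by rintro _ ⟨i, rfl⟩; exact le_subset_leq_zero (hS i)) m

lemma BoundedAbove.exists_mem_leq (hT : T.BoundedAbove) (X : C) : ∃ n : ℕ, X ∈ T.leq n :=
  let ⟨n, hn⟩ := hT X
  ⟨n, (isExtensionClosed_leq _).of_iso (shiftShiftNeg X (n : ℤ)).symm
    (shift_mem_leq (le_subset_leq_zero hn) (by omega))⟩

lemma BoundedBelow.exists_mem_geq (hT : T.BoundedBelow) (X : C) : ∃ n : ℕ, X ∈ T.geq (-n) :=
  let ⟨n, hn⟩ := hT X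
  ⟨n, (isExtensionClosed_geq _).of_iso (shiftNegShift X (n : ℤ)).symm
    (shift_mem_geq (ge_subset_geq_zero hn) (by omega))⟩

structure IsAlgebraicHeart (T : TStructure C) {k : ℕ} (S : Fin k → C) : Prop where
  mem_heart : ∀ i, S i ∈ T.le ∩ T.ge
  exists_mem_coprodN : ∀ X ∈ T.le ∩ T.ge, ∃ m : ℕ, X ∈ coprodN C {Y | ∃ i, Y = S i} (m + 1)

section Generation

variable {k : ℕ} {S : Fin k → C} {G : C}

lemma mem_gen_of_mem_geq_one_of_mem_leq {n : ℤ}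
    (hn : T.geq 0 ∩ T.leq n ⊆ gen C G (Set.Icc 0 n)) {R : C} (hR₁ : R ∈ T.geq 1)
    (hR₂ : R ∈ T.leq (n + 1)) : R ∈ gen C G (Set.Icc 0 (n + 1)) :=
  mem_gen_of_shift_mem_gen (I := Set.Icc 0 n) (I' := Set.Icc 0 (n + 1)) 1
    (fun _ hi => ⟨by linarith [hi.1], by linarith [hi.2]⟩)
    (hn (Set.mem_inter (shift_mem_geq hR₁ (by omega)) (shift_mem_leq hR₂ (by omega))))

/-- Induction on the length of `A = A₁ * A₂`: the cone `Y₁` of `A₁ ⟶ Y` has a truncation whose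
heart part is isomorphic to `A₂`. -/
lemma mem_gen_of_distTriang {n : ℤ} (h0n : 0 ≤ n) (hS : ∀ i, S i ∈ T.le)
    (hG : IsFiniteDirSum G S) (hn : T.geq 0 ∩ T.leq n ⊆ gen C G (Set.Icc 0 n)) :
    ∀ (m : ℕ) {A Y R : C} {f : A ⟶ Y} {g : Y ⟶ R} {h : R ⟶ A⟦(1 : ℤ)⟧},
      Triangle.mk f g h ∈ distTriang C → A ∈ coprodN C {Y | ∃ i, Y = S i} (m + 1) →
      Y ∈ T.leq (n + 1) → R ∈ T.geq 1 → Y ∈ gen C G (Set.Icc 0 (n + 1))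
  | 0, A, Y, R, f, g, h, hT, hA, hY, hR =>
      star_addClos_gen_subset (hG.subset_smd_shiftsOf (I := Set.Icc 0 (n + 1)) ⟨le_rfl, by omega⟩)
        ⟨A, R, f, g, h, hA, mem_gen_of_mem_geq_one_of_mem_leq hn hR
          (obj₃_mem_leq hT (by omega) (coprodN_subset_le hS 1 hA) hY), hT⟩
  | m + 1, A, Y, R, f, g, h, hT, ⟨A₁, A₂, u, q, δ, hA₁, hA₂, hTA⟩, hY, hR => by
      obtain ⟨Y₁, g₁, δ₁, hTY₁⟩ := distinguished_cocone_triangle (u ≫ f)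
      obtain ⟨e, he₂, he₃⟩ : ∃ e : A₂ ⟶ Y₁, q ≫ e = f ≫ g₁ ∧ δ ≫ (𝟙 A₁)⟦(1 : ℤ)⟧' = e ≫ δ₁ :=
        complete_distinguished_triangle_morphism _ _ hTA hTY₁ (𝟙 A₁) f (by simp [Triangle.mk])
      obtain ⟨A', R', t, g', h', hT', hA', hR'⟩ := T.exists_distTriang_le_geq_one Y₁
      obtain ⟨eA⟩ := nonempty_iso_of_isHomBijectiveOn (coprodN_subset_le hS _ hA₂) hA'
        (isHomBijectiveOn_of_octahedron hTA hT hTY₁ he₂ (by simpa using he₃)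
          (isHomBijectiveOn_le_mor₁ hT hR) (geq_one_subset_rightOrth_le hR))
        (isHomBijectiveOn_le_mor₁ hT' hR')
      exact star_addClos_gen_subset
        (hG.subset_smd_shiftsOf (I := Set.Icc 0 (n + 1)) ⟨le_rfl, by omega⟩)
        ⟨A₁, Y₁, _, _, _, hA₁, mem_gen_of_distTriang h0n hS hG hn m
          (distinguished_of_isos hT' eA (Iso.refl _) (Iso.refl _)) hA₂
          (obj₃_mem_leq hTY₁ (by omega) (coprodN_subset_le hS 1 hA₁) hY) hR', hTY₁⟩

lemma geq_zero_inter_leq_subset_gen (hS : T.IsAlgebraicHeart S) (hG : IsFiniteDirSum G S) :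
    ∀ n : ℕ, T.geq 0 ∩ T.leq n ⊆ gen C G (Set.Icc 0 n)
  | 0, Y, ⟨hY₁, hY₂⟩ => by
      rw [geq_zero] at hY₁
      rw [Nat.cast_zero, leq_zero] at hY₂
      obtain ⟨m, hm⟩ := hS.exists_mem_coprodN Y ⟨hY₂, hY₁⟩
      exact coprodN_subset_gen (hG.subset_smd_shiftsOf (by simp)) m hm
  | n + 1, Y, ⟨hY₁, hY₂⟩ => by
      obtain ⟨A, R, f, g, h, hT, hA, hR⟩ := T.exists_distTriang_le_geq_one Y
      have hA' : A ∈ T.geq 0 := (isExtensionClosed_geq 0).ext (inv_rot_of_distTriang _ hT)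
        (shift_mem_geq hR (by omega)) hY₁
      obtain ⟨m, hm⟩ := hS.exists_mem_coprodN A ⟨hA, by rwa [geq_zero] at hA'⟩
      push_cast at hY₂ ⊢
      exact mem_gen_of_distTriang (Nat.cast_nonneg n) (fun i => (hS.mem_heart i).1) hG
        (geq_zero_inter_leq_subset_gen hS hG n) m hT hm hY₂ hR

lemma geq_inter_leq_subset_gen (hS : T.IsAlgebraicHeart S) (hG : IsFiniteDirSum G S) {a b : ℤ}
    (hab : b ≤ a) :
    T.geq b ∩ T.leq a ⊆ gen C G (Set.Icc b a) := by
  rintro X ⟨hX₁, hX₂⟩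
  obtain ⟨n, hn⟩ : ∃ n : ℕ, (n : ℤ) = a - b := ⟨(a - b).toNat, by omega⟩
  exact mem_gen_of_shift_mem_gen (I := Set.Icc 0 (n : ℤ)) (I' := Set.Icc b a) b
    (fun _ hi => ⟨by linarith [hi.1], by linarith [hi.2]⟩)
    (geq_zero_inter_leq_subset_gen hS hG n
      (Set.mem_inter (shift_mem_geq hX₁ (by omega)) (shift_mem_leq hX₂ (by omega))))

lemma gen_Ici_zero_subset_ge (hS : ∀ i, S i ∈ T.ge) (hG : IsFiniteDirSum G S) :
    gen C G (Set.Ici 0) ⊆ T.ge := by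
  have hG₀ : G ∈ T.geq 0 := hG.mem_rightOrth fun i => ge_subset_geq_zero (hS i)
  rw [← geq_zero]
  refine (isExtensionClosed_geq 0).gen_subset ?_
  rintro X ⟨i, hi, ⟨e⟩⟩
  exact (isExtensionClosed_geq 0).of_iso e (shift_mem_geq hG₀ (by simp at hi; omega))

lemma gen_Ici_zero_eq_ge (hS : T.IsAlgebraicHeart S) (hG : IsFiniteDirSum G S)
    (hT : T.BoundedAbove) : gen C G (Set.Ici 0) = T.ge := by
  refine subset_antisymm (gen_Ici_zero_subset_ge (fun i => (hS.mem_heart i).2) hG) fun Y hY => ?_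
  obtain ⟨n, hn⟩ := hT.exists_mem_leq Y
  exact gen_mono Set.Icc_subset_Ici_self
    (geq_inter_leq_subset_gen hS hG (Nat.cast_nonneg n) ⟨ge_subset_geq_zero hY, hn⟩)

lemma rPerpShifts_eq_ge (hS : T.IsAlgebraicHeart S) (hG : IsFiniteDirSum G S)
    (hT : T.BoundedBelow) :
    rPerpShifts C G (Set.Iic (-1)) = T.ge := by
  refine subset_antisymm (fun Y hY => ?_) fun Y hY i hi f => ?_
  · have hperp : gen C G (Set.Iic (-1)) ⊆ leftOrth {Y} := by
      refine (isExtensionClosed_leftOrth {Y}).gen_subset ?_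
      rintro X ⟨i, hi, ⟨e⟩⟩ _ rfl g
      rw [← e.hom_inv_id_assoc g, hY i hi (e.inv ≫ g), comp_zero]
    rw [← geq_zero]
    intro W hW f
    obtain ⟨n, hn⟩ := hT.exists_mem_geq W
    exact hperp (gen_mono Set.Icc_subset_Iic_self (geq_inter_leq_subset_gen hS hG
      (show -(n : ℤ) - 1 ≤ -1 by omega) ⟨geq_anti (by omega) hn, leq_mono (by omega) hW⟩)) Y rfl f
  · have hG₀ : G ∈ T.leq 0 := hG.mem_leftOrth fun i => le_subset_leq_zero (hS.mem_heart i).1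
    exact ge_subset_geq_zero hY _ (shift_mem_leq hG₀ (by simp at hi; omega)) f

lemma mem_gen_univ (hS : T.IsAlgebraicHeart S) (hG : IsFiniteDirSum G S) (hT : T.Bounded)
    (X : C) : X ∈ gen C G Set.univ := by
  obtain ⟨a, ha⟩ := hT.1.exists_mem_leq X
  obtain ⟨b, hb⟩ := hT.2.exists_mem_geq X
  exact gen_mono (Set.subset_univ _)
    (geq_inter_leq_subset_gen hS hG (by omega) ⟨hb, ha⟩)

end Generation

end TStructure

end Pretriangulated

/-- Let `(𝒮^{≤0}, 𝒮^{≥0})` be a bounded t-structure whose heart is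
algebraic, with "simple" objects `S 1, …, S k`, and let `G := S 1 ⊕ ⋯ ⊕ S k`.  Then `G` is
a classical generator of `𝒮` and `fd(𝒮, G) = 0`; in fact
`G(-∞,-1]^⊥ = ⟨G⟩^{[0,∞)} = 𝒮^{≥0}`. -/
theorem fd_zero_of_algebraic_tstructure
    (C : Type u) [Category.{v} C] [HasZeroObject C] [HasShift C ℤ]
    [Preadditive C] [∀ n : ℤ, (shiftFunctor C n).Additive] [Pretriangulated C]
    (T : TStructure C) (hT : T.Bounded) (k : ℕ) (S : Fin k → C)
    (hSheart : ∀ i, S i ∈ T.le ∩ T.ge)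
    (hlength : ∀ X ∈ T.le ∩ T.ge, ∃ m : ℕ, X ∈ coprodN C {Y | ∃ i, Y = S i} (m+1))
    (G : C) (hG : IsFiniteDirSum G S) :
    (∀ X : C, X ∈ gen C G Set.univ) ∧
    rPerpShifts C G (Set.Iic (-1)) = gen C G (Set.Ici 0) ∧
    gen C G (Set.Ici 0) = T.ge ∧
    fdLE C G 0 := by
  have hS : T.IsAlgebraicHeart S := ⟨hSheart, hlength⟩
  have hgen := TStructure.gen_Ici_zero_eq_ge hS hG hT.1
  have hperp := TStructure.rPerpShifts_eq_ge hS hG hT.2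
  refine ⟨TStructure.mem_gen_univ hS hG hT, hperp.trans hgen.symm, hgen,
    fun X hX => ?_⟩
  rwa [neg_zero, hgen, ← hperp]

end Paper
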